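/- arXiv:1704.02790 — 6 statements merged into one kernel-verified Lean document; each statement's English description precedes it below -/
import Mathlib

section
/- Let (Ω, F, P) be a probability space, let τ ≤ t be natural numbers, and for each natural number u with τ ≤ u ≤ t let X₁(τ,u) and X₂(u,t) be random variables taking values in (0,∞) such that X₁(τ,u) and X₂(u,t) are independent. Then for every real s < 1, E[(min_{τ≤u≤t} X₁(τ,u)·X₂(u,t))^{s−1}] ≤ Σ_{u=τ}^{t} E[X₁(τ,u)^{s−1}]·E[X₂(u,t)^{s−1}], where both sides are allowed to take the value +∞. -/
/-! The minimum is attained at some `u`, so its power is one term of the sum `∑ᵤ (X₁ X₂)^(s-1)`;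
`(X₁ X₂)^(s-1) = X₁^(s-1) X₂^(s-1)` for positive values, and independence factors the expectation
of each term. -/

open MeasureTheory ProbabilityTheory

theorem Finset.apply_inf'_le_sum {ι α M : Type*} [LinearOrder α] [AddCommMonoid M] [PartialOrder M]
    [IsOrderedAddMonoid M] [CanonicallyOrderedAdd M] (s : Finset ι) (hs : s.Nonempty)
    (F : ι → α) (h : α → M) : h (s.inf' hs F) ≤ ∑ i ∈ s, h (F i) := by
  obtain ⟨i, hi, hinf⟩ := s.exists_mem_eq_inf' hs F
  rw [hinf]
  exact Finset.single_le_sum (f := fun i => h (F i)) (fun _ _ => zero_le) hi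

theorem lintegral_ofReal_mul_rpow_of_indepFun {Ω : Type*} [MeasurableSpace Ω] {μ : Measure Ω}
    {X Y : Ω → ℝ} (hX : Measurable X) (hY : Measurable Y) (hX₀ : ∀ ω, 0 ≤ X ω)
    (hY₀ : ∀ ω, 0 ≤ Y ω) (hXY : IndepFun X Y μ) (r : ℝ) :
    ∫⁻ ω, ENNReal.ofReal ((X ω * Y ω) ^ r) ∂μ =
      (∫⁻ ω, ENNReal.ofReal (X ω ^ r) ∂μ) * ∫⁻ ω, ENNReal.ofReal (Y ω ^ r) ∂μ := by
  have hpow : Measurable fun x : ℝ => ENNReal.ofReal (x ^ r) :=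
    (measurable_id.pow_const r).ennreal_ofReal
  simp_rw [Real.mul_rpow (hX₀ _) (hY₀ _), ENNReal.ofReal_mul (Real.rpow_nonneg (hX₀ _) r)]
  exact lintegral_mul_eq_lintegral_mul_lintegral_of_indepFun''
    (hpow.comp hX).aemeasurable (hpow.comp hY).aemeasurable (hXY.comp hpow hpow)

theorem minTimes_convolution_mellin_bound_general
    {Ω : Type*} [MeasureSpace Ω]
    (X₁ X₂ : ℕ → ℕ → Ω → ℝ) (τ t : ℕ) (hτt : τ ≤ t)
    (hmeas₁ : ∀ u, τ ≤ u → u ≤ t → Measurable (X₁ τ u))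
    (hmeas₂ : ∀ u, τ ≤ u → u ≤ t → Measurable (X₂ u t))
    (hpos₁ : ∀ u, τ ≤ u → u ≤ t → ∀ ω, 0 < X₁ τ u ω)
    (hpos₂ : ∀ u, τ ≤ u → u ≤ t → ∀ ω, 0 < X₂ u t ω)
    (hindep : ∀ u, τ ≤ u → u ≤ t → IndepFun (X₁ τ u) (X₂ u t) ℙ)
    (s : ℝ) :
    ∫⁻ ω, ENNReal.ofReal
        (((Finset.Icc τ t).inf' (Finset.nonempty_Icc.mpr hτt)
          (fun u => X₁ τ u ω * X₂ u t ω)) ^ (s - 1)) ∂ℙ ≤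
      ∑ u ∈ Finset.Icc τ t,
        (∫⁻ ω, ENNReal.ofReal (X₁ τ u ω ^ (s - 1)) ∂ℙ) *
        (∫⁻ ω, ENNReal.ofReal (X₂ u t ω ^ (s - 1)) ∂ℙ) := by
  calc _ ≤ ∫⁻ ω, ∑ u ∈ Finset.Icc τ t, ENNReal.ofReal ((X₁ τ u ω * X₂ u t ω) ^ (s - 1)) ∂ℙ :=
        lintegral_mono fun ω => Finset.apply_inf'_le_sum _ _ _ fun x => ENNReal.ofReal (x ^ (s - 1))
    _ = ∑ u ∈ Finset.Icc τ t, ∫⁻ ω, ENNReal.ofReal ((X₁ τ u ω * X₂ u t ω) ^ (s - 1)) ∂ℙ := by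
        refine lintegral_finsetSum _ fun u hu => ?_
        obtain ⟨hτu, hut⟩ := Finset.mem_Icc.mp hu
        exact (((hmeas₁ u hτu hut).mul (hmeas₂ u hτu hut)).pow_const _).ennreal_ofReal
    _ = _ := by
        refine Finset.sum_congr rfl fun u hu => ?_
        obtain ⟨hτu, hut⟩ := Finset.mem_Icc.mp hu
        exact lintegral_ofReal_mul_rpow_of_indepFun (hmeas₁ u hτu hut) (hmeas₂ u hτu hut)
          (fun ω => (hpos₁ u hτu hut ω).le) (fun ω => (hpos₂ u hτu hut ω).le) (hindep u hτu hut) _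

/-- Convolution bound of the (min,×) stochastic network calculus:
the Mellin transform (at `s < 1`) of the (min,×)-convolution of two independent positive
SNR processes is bounded by the sum of products of their Mellin transforms. -/
theorem minTimes_convolution_mellin_bound
    {Ω : Type*} [MeasureSpace Ω] [IsProbabilityMeasure (ℙ : Measure Ω)]
    (X₁ X₂ : ℕ → ℕ → Ω → ℝ) (τ t : ℕ) (hτt : τ ≤ t)
    (hmeas₁ : ∀ u, τ ≤ u → u ≤ t → Measurable (X₁ τ u))
    (hmeas₂ : ∀ u, τ ≤ u → u ≤ t → Measurable (X₂ u t))
    (hpos₁ : ∀ u, τ ≤ u → u ≤ t → ∀ ω, 0 < X₁ τ u ω)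
    (hpos₂ : ∀ u, τ ≤ u → u ≤ t → ∀ ω, 0 < X₂ u t ω)
    (hindep : ∀ u, τ ≤ u → u ≤ t → IndepFun (X₁ τ u) (X₂ u t) ℙ)
    (s : ℝ) (hs : s < 1) :
    ∫⁻ ω, ENNReal.ofReal
        (((Finset.Icc τ t).inf' (Finset.nonempty_Icc.mpr hτt)
          (fun u => X₁ τ u ω * X₂ u t ω)) ^ (s - 1)) ∂ℙ ≤
      ∑ u ∈ Finset.Icc τ t,
        (∫⁻ ω, ENNReal.ofReal (X₁ τ u ω ^ (s - 1)) ∂ℙ) *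
        (∫⁻ ω, ENNReal.ofReal (X₂ u t ω ^ (s - 1)) ∂ℙ) :=
  minTimes_convolution_mellin_bound_general X₁ X₂ τ t hτt hmeas₁ hmeas₂ hpos₁ hpos₂ hindep s
end

section
/- Let (Ω, F, P) be a probability space, let τ ≤ t be natural numbers, and for each natural number u with 0 ≤ u ≤ τ let X₁(u,t) and X₂(u,τ) be random variables taking values in (0,∞) such that X₁(u,t) and X₂(u,τ) are independent. Then for every real s > 1, E[(max_{0≤u≤τ} X₁(u,t)/X₂(u,τ))^{s−1}] ≤ Σ_{u=0}^{τ} E[X₁(u,t)^{s−1}]·E[X₂(u,τ)^{1−s}], where both sides are allowed to take the value +∞. -/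
open MeasureTheory ProbabilityTheory

/-- Deconvolution bound of the (min,×) stochastic network calculus:
the Mellin transform at `s > 1` of the (min,×)-deconvolution
`X₁ ⊘ X₂ (τ,t) = max_{0≤u≤τ} X₁(u,t)/X₂(u,τ)` of two independent positive SNR processes
is bounded by `Σ_{u=0}^{τ} E[X₁(u,t)^{s−1}]·E[X₂(u,τ)^{1−s}]`. -/
theorem minTimes_deconvolution_mellin_bound
    {Ω : Type*} [MeasureSpace Ω] [IsProbabilityMeasure (ℙ : Measure Ω)]
    (X₁ X₂ : ℕ → ℕ → Ω → ℝ) (τ t : ℕ) (hτt : τ ≤ t)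
    (hmeas₁ : ∀ u, u ≤ τ → Measurable (X₁ u t))
    (hmeas₂ : ∀ u, u ≤ τ → Measurable (X₂ u τ))
    (hpos₁ : ∀ u, u ≤ τ → ∀ ω, 0 < X₁ u t ω)
    (hpos₂ : ∀ u, u ≤ τ → ∀ ω, 0 < X₂ u τ ω)
    (hindep : ∀ u, u ≤ τ → IndepFun (X₁ u t) (X₂ u τ) ℙ)
    (s : ℝ) (hs : 1 < s) :
    ∫⁻ ω, ENNReal.ofReal
        (((Finset.Icc 0 τ).sup' (Finset.nonempty_Icc.mpr (Nat.zero_le τ))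
          (fun u => X₁ u t ω / X₂ u τ ω)) ^ (s - 1)) ∂ℙ ≤
      ∑ u ∈ Finset.Icc 0 τ,
        (∫⁻ ω, ENNReal.ofReal (X₁ u t ω ^ (s - 1)) ∂ℙ) *
        (∫⁻ ω, ENNReal.ofReal (X₂ u τ ω ^ (1 - s)) ∂ℙ) := by
  have hmem : ∀ u ∈ Finset.Icc 0 τ, u ≤ τ := by
    intro u hu; exact (Finset.mem_Icc.mp hu).2
  -- pointwise bound
  have hpt : ∀ ω, ENNReal.ofReal
      (((Finset.Icc 0 τ).sup' (Finset.nonempty_Icc.mpr (Nat.zero_le τ))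
        (fun u => X₁ u t ω / X₂ u τ ω)) ^ (s - 1)) ≤
      ∑ u ∈ Finset.Icc 0 τ, ENNReal.ofReal ((X₁ u t ω / X₂ u τ ω) ^ (s - 1)) := by
    intro ω
    obtain ⟨u₀, hu₀, hsup⟩ := Finset.exists_mem_eq_sup' (Finset.nonempty_Icc.mpr (Nat.zero_le τ))
      (fun u => X₁ u t ω / X₂ u τ ω)
    rw [hsup]
    exact Finset.single_le_sum
      (f := fun u => ENNReal.ofReal ((X₁ u t ω / X₂ u τ ω) ^ (s - 1)))
      (fun u _ => zero_le) hu₀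
  have hmeasdiv : ∀ u, u ≤ τ → Measurable
      (fun ω => ENNReal.ofReal ((X₁ u t ω / X₂ u τ ω) ^ (s - 1))) := by
    intro u hu
    exact (((hmeas₁ u hu).div (hmeas₂ u hu)).pow_const (s - 1)).ennreal_ofReal
  calc ∫⁻ ω, ENNReal.ofReal
        (((Finset.Icc 0 τ).sup' (Finset.nonempty_Icc.mpr (Nat.zero_le τ))
          (fun u => X₁ u t ω / X₂ u τ ω)) ^ (s - 1)) ∂ℙ
      ≤ ∫⁻ ω, ∑ u ∈ Finset.Icc 0 τ, ENNReal.ofReal ((X₁ u t ω / X₂ u τ ω) ^ (s - 1)) ∂ℙ :=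
        lintegral_mono hpt
    _ = ∑ u ∈ Finset.Icc 0 τ, ∫⁻ ω, ENNReal.ofReal ((X₁ u t ω / X₂ u τ ω) ^ (s - 1)) ∂ℙ :=
        lintegral_finset_sum _ (fun u hu => hmeasdiv u (hmem u hu))
    _ ≤ ∑ u ∈ Finset.Icc 0 τ,
        (∫⁻ ω, ENNReal.ofReal (X₁ u t ω ^ (s - 1)) ∂ℙ) *
        (∫⁻ ω, ENNReal.ofReal (X₂ u τ ω ^ (1 - s)) ∂ℙ) := by
      apply Finset.sum_le_sum
      intro u hu
      have hu' := hmem u hu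
      have hkey : ∀ ω, ENNReal.ofReal ((X₁ u t ω / X₂ u τ ω) ^ (s - 1)) =
          ENNReal.ofReal (X₁ u t ω ^ (s - 1)) * ENNReal.ofReal (X₂ u τ ω ^ (1 - s)) := by
        intro ω
        rw [Real.div_rpow (hpos₁ u hu' ω).le (hpos₂ u hu' ω).le]
        rw [div_eq_mul_inv, ← Real.rpow_neg (hpos₂ u hu' ω).le, neg_sub]
        exact ENNReal.ofReal_mul (Real.rpow_nonneg (hpos₁ u hu' ω).le _)
      simp only [hkey]
      have h1 : Measurable (fun x : ℝ => ENNReal.ofReal (x ^ (s - 1))) :=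
        (measurable_id.pow_const (s - 1)).ennreal_ofReal
      have h2 : Measurable (fun x : ℝ => ENNReal.ofReal (x ^ (1 - s))) :=
        (measurable_id.pow_const (1 - s)).ennreal_ofReal
      have hind : IndepFun (fun ω => ENNReal.ofReal (X₁ u t ω ^ (s - 1)))
          (fun ω => ENNReal.ofReal (X₂ u τ ω ^ (1 - s))) ℙ :=
        (hindep u hu').comp h1 h2
      rw [show (∫⁻ ω, ENNReal.ofReal (X₁ u t ω ^ (s - 1)) *
            ENNReal.ofReal (X₂ u τ ω ^ (1 - s)) ∂ℙ) =
          ∫⁻ ω, ((fun ω => ENNReal.ofReal (X₁ u t ω ^ (s - 1))) *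
            (fun ω => ENNReal.ofReal (X₂ u τ ω ^ (1 - s)))) ω ∂ℙ from rfl,
        lintegral_mul_eq_lintegral_mul_lintegral_of_indepFun
          ((hmeas₁ u hu').pow_const (s - 1)).ennreal_ofReal
          ((hmeas₂ u hu').pow_const (1 - s)).ennreal_ofReal hind]
end

section
/- Let a : ℕ → ℝ and s : ℕ → ℝ be nonnegative sequences, define B(0) = 0 and B(t) = max(B(t−1) + a(t) − s(t), 0) for t ≥ 1, let A(u,t) = Σ_{v=u+1}^{t} a(v) and S(u,t) = Σ_{v=u+1}^{t} s(v) for u ≤ t, and define the cumulative departures D(0,t) = A(0,t) − B(t). Then for every t ≥ 0, D(0,t) ≥ min_{0≤u≤t} ( A(0,u) + S(u,t) ). -/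
/-- For a discrete-time work-conserving queue with nonnegative per-slot arrivals `a` and
service `srv`, backlog given by the Lindley recursion, and cumulative departures
`D(0,t) = A(0,t) − B(t)`, the departures are bounded below by the (min,+)-convolution:
`D(0,t) ≥ min_{0≤u≤t} (A(0,u) + S(u,t))`. -/
theorem departures_ge_minplus_convolution_from_zero
    (a srv : ℕ → ℝ) (ha : ∀ v, 0 ≤ a v) (hsrv : ∀ v, 0 ≤ srv v)
    (B : ℕ → ℝ) (hB0 : B 0 = 0)
    (hB : ∀ t : ℕ, B (t + 1) = max (B t + a (t + 1) - srv (t + 1)) 0)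
    (t : ℕ) :
    (∑ v ∈ Finset.Icc 1 t, a v) - B t ≥
      (Finset.Icc 0 t).inf' (Finset.nonempty_Icc.mpr (Nat.zero_le t))
        (fun u => (∑ v ∈ Finset.Icc 1 u, a v) + ∑ v ∈ Finset.Icc (u + 1) t, srv v) := by
  induction t with
  | zero =>
    simp [hB0]
  | succ t ih =>
    rcases max_cases (B t + a (t + 1) - srv (t + 1)) 0 with ⟨heq, _⟩ | ⟨heq, _⟩
    · -- B (t+1) = B t + a (t+1) - srv (t+1)
      rw [hB t, heq]
      obtain ⟨u, hu, hval⟩ := Finset.exists_mem_eq_inf' (Finset.nonempty_Icc.mpr (Nat.zero_le t))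
        (fun u => (∑ v ∈ Finset.Icc 1 u, a v) + ∑ v ∈ Finset.Icc (u + 1) t, srv v)
      have hut : u ≤ t := (Finset.mem_Icc.mp hu).2
      have hmem : u ∈ Finset.Icc 0 (t + 1) := Finset.mem_Icc.mpr ⟨Nat.zero_le _, hut.trans (Nat.le_succ t)⟩
      have hle := Finset.inf'_le (b := u)
        (f := fun u => (∑ v ∈ Finset.Icc 1 u, a v) + ∑ v ∈ Finset.Icc (u + 1) (t + 1), srv v) hmem
      refine le_trans hle ?_
      have hS : ∑ v ∈ Finset.Icc (u + 1) (t + 1), srv v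
          = (∑ v ∈ Finset.Icc (u + 1) t, srv v) + srv (t + 1) :=
        Finset.sum_Icc_succ_top (Nat.succ_le_succ hut) _
      have hA : ∑ v ∈ Finset.Icc 1 (t + 1), a v
          = (∑ v ∈ Finset.Icc 1 t, a v) + a (t + 1) :=
        Finset.sum_Icc_succ_top (Nat.succ_le_succ (Nat.zero_le t)) _
      have : (∑ v ∈ Finset.Icc 1 u, a v) + ∑ v ∈ Finset.Icc (u + 1) t, srv v
          ≤ (∑ v ∈ Finset.Icc 1 t, a v) - B t := by rw [← hval]; exact ih
      simp only [hS, hA]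
      linarith
    · -- B (t+1) = 0
      rw [hB t, heq]
      have hmem : t + 1 ∈ Finset.Icc 0 (t + 1) := Finset.mem_Icc.mpr ⟨Nat.zero_le _, le_refl _⟩
      have hle := Finset.inf'_le (b := t + 1)
        (f := fun u => (∑ v ∈ Finset.Icc 1 u, a v) + ∑ v ∈ Finset.Icc (u + 1) (t + 1), srv v) hmem
      refine le_trans hle ?_
      simp
end

section
/- Let a : ℕ → ℝ and s : ℕ → ℝ be nonnegative sequences, define B(0) = 0 and B(t) = max(B(t−1) + a(t) − s(t), 0) for t ≥ 1, let A(u,t) = Σ_{v=u+1}^{t} a(v) and S(u,t) = Σ_{v=u+1}^{t} s(v) for u ≤ t, define D(0,t) = A(0,t) − B(t) and D(τ,t) = D(0,t) − D(0,τ) for τ ≤ t. Then for all natural numbers 0 ≤ τ ≤ t, D(τ,t) ≥ min_{τ≤u≤t} ( A(τ,u) + S(u,t) ). -/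
section Aux

variable (a srv : ℕ → ℝ) (B : ℕ → ℝ)

/-- B dominates every A(u,t) − S(u,t). -/
lemma backlog_ge_sup (hB0 : B 0 = 0)
    (hB : ∀ t : ℕ, B (t + 1) = max (B t + a (t + 1) - srv (t + 1)) 0) :
    ∀ t u : ℕ, u ≤ t →
      (∑ v ∈ Finset.Ioc u t, a v) - (∑ v ∈ Finset.Ioc u t, srv v) ≤ B t := by
  intro t
  induction t with
  | zero =>
    intro u hu
    interval_cases u
    simp [hB0]
  | succ n ih =>
    intro u hu
    rcases Nat.lt_or_ge u (n + 1) with h | h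
    · have hun : u ≤ n := Nat.lt_succ_iff.mp h
      have h1 : (∑ v ∈ Finset.Ioc u n, a v) + ∑ v ∈ Finset.Ioc n (n+1), a v
          = ∑ v ∈ Finset.Ioc u (n+1), a v :=
        Finset.sum_Ioc_consecutive _ hun (Nat.le_succ n)
      have h2 : (∑ v ∈ Finset.Ioc u n, srv v) + ∑ v ∈ Finset.Ioc n (n+1), srv v
          = ∑ v ∈ Finset.Ioc u (n+1), srv v :=
        Finset.sum_Ioc_consecutive _ hun (Nat.le_succ n)
      have h3 : ∑ v ∈ Finset.Ioc n (n+1), a v = a (n+1) := by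
        rw [Finset.sum_Ioc_succ_top (le_refl n), Finset.Ioc_self, Finset.sum_empty, zero_add]
      have h4 : ∑ v ∈ Finset.Ioc n (n+1), srv v = srv (n+1) := by
        rw [Finset.sum_Ioc_succ_top (le_refl n), Finset.Ioc_self, Finset.sum_empty, zero_add]
      have := ih u hun
      have hmax : B n + a (n+1) - srv (n+1) ≤ B (n+1) := by
        rw [hB n]; exact le_max_left _ _
      linarith
    · have : u = n + 1 := le_antisymm hu h
      subst this
      simp only [Finset.Ioc_self, Finset.sum_empty, sub_zero]
      rw [hB n]
      have := le_max_right (B n + a (n + 1) - srv (n + 1)) (0 : ℝ)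
      linarith

/-- B is attained (bounded above) by some A(u₀,t) − S(u₀,t). -/
lemma backlog_le_some (hB0 : B 0 = 0)
    (hB : ∀ t : ℕ, B (t + 1) = max (B t + a (t + 1) - srv (t + 1)) 0) :
    ∀ t : ℕ, ∃ u ≤ t,
      B t ≤ (∑ v ∈ Finset.Ioc u t, a v) - (∑ v ∈ Finset.Ioc u t, srv v) := by
  intro t
  induction t with
  | zero => exact ⟨0, le_refl 0, by simp [hB0]⟩
  | succ n ih =>
    rcases le_or_gt (B n + a (n + 1) - srv (n + 1)) 0 with h | h
    · refine ⟨n + 1, le_refl _, ?_⟩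
      rw [hB n, max_eq_right h]
      simp
    · obtain ⟨u, hun, hu⟩ := ih
      refine ⟨u, hun.trans (Nat.le_succ n), ?_⟩
      rw [hB n, max_eq_left h.le]
      have h1 : (∑ v ∈ Finset.Ioc u n, a v) + ∑ v ∈ Finset.Ioc n (n+1), a v
          = ∑ v ∈ Finset.Ioc u (n+1), a v :=
        Finset.sum_Ioc_consecutive _ hun (Nat.le_succ n)
      have h2 : (∑ v ∈ Finset.Ioc u n, srv v) + ∑ v ∈ Finset.Ioc n (n+1), srv v
          = ∑ v ∈ Finset.Ioc u (n+1), srv v :=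
        Finset.sum_Ioc_consecutive _ hun (Nat.le_succ n)
      have h3 : ∑ v ∈ Finset.Ioc n (n+1), a v = a (n+1) := by
        rw [Finset.sum_Ioc_succ_top (le_refl n), Finset.Ioc_self, Finset.sum_empty, zero_add]
      have h4 : ∑ v ∈ Finset.Ioc n (n+1), srv v = srv (n+1) := by
        rw [Finset.sum_Ioc_succ_top (le_refl n), Finset.Ioc_self, Finset.sum_empty, zero_add]
      linarith

end Aux

/-- For a discrete-time work-conserving queue with nonnegative per-slot arrivals `a` and
service `srv`, backlog given by the Lindley recursion, cumulative departures
`D(0,t) = A(0,t) − B(t)` and `D(τ,t) = D(0,t) − D(0,τ)`, the bivariate departure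
process is bounded below by the (min,+)-convolution on `[τ,t]`:
`D(τ,t) ≥ min_{τ≤u≤t} (A(τ,u) + S(u,t))`. -/
theorem departures_ge_minplus_convolution
    (a srv : ℕ → ℝ) (ha : ∀ v, 0 ≤ a v) (hsrv : ∀ v, 0 ≤ srv v)
    (B : ℕ → ℝ) (hB0 : B 0 = 0)
    (hB : ∀ t : ℕ, B (t + 1) = max (B t + a (t + 1) - srv (t + 1)) 0)
    (τ t : ℕ) (hτt : τ ≤ t) :
    ((∑ v ∈ Finset.Icc 1 t, a v) - B t) - ((∑ v ∈ Finset.Icc 1 τ, a v) - B τ) ≥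
      (Finset.Icc τ t).inf' (Finset.nonempty_Icc.mpr hτt)
        (fun u => (∑ v ∈ Finset.Icc (τ + 1) u, a v) + ∑ v ∈ Finset.Icc (u + 1) t, srv v) := by
  -- Convert Icc (k+1) m to Ioc k m
  have hIcc : ∀ (f : ℕ → ℝ) (k m : ℕ), ∑ v ∈ Finset.Icc (k + 1) m, f v
      = ∑ v ∈ Finset.Ioc k m, f v := by
    intro f k m
    rw [← Finset.Icc_add_one_left_eq_Ioc]
  have hIcc1 : ∀ (f : ℕ → ℝ) (m : ℕ), ∑ v ∈ Finset.Icc 1 m, f v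
      = ∑ v ∈ Finset.Ioc 0 m, f v := by
    intro f m; exact hIcc f 0 m
  obtain ⟨u0, hu0t, hu0⟩ := backlog_le_some a srv B hB0 hB t
  have hBτ0 : 0 ≤ B τ := by
    have := backlog_ge_sup a srv B hB0 hB τ τ (le_refl τ)
    simpa using this
  rcases le_or_gt τ u0 with hcase | hcase
  · -- u0 ∈ [τ, t]
    have hmem : u0 ∈ Finset.Icc τ t := Finset.mem_Icc.mpr ⟨hcase, hu0t⟩
    have hinf : (Finset.Icc τ t).inf' (Finset.nonempty_Icc.mpr hτt)
          (fun u => (∑ v ∈ Finset.Icc (τ + 1) u, a v) + ∑ v ∈ Finset.Icc (u + 1) t, srv v)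
        ≤ (∑ v ∈ Finset.Icc (τ + 1) u0, a v) + ∑ v ∈ Finset.Icc (u0 + 1) t, srv v :=
      Finset.inf'_le _ hmem
    have hA1 : (∑ v ∈ Finset.Ioc 0 τ, a v) + ∑ v ∈ Finset.Ioc τ u0, a v
        = ∑ v ∈ Finset.Ioc 0 u0, a v :=
      Finset.sum_Ioc_consecutive _ (Nat.zero_le τ) hcase
    have hA2 : (∑ v ∈ Finset.Ioc 0 u0, a v) + ∑ v ∈ Finset.Ioc u0 t, a v
        = ∑ v ∈ Finset.Ioc 0 t, a v :=
      Finset.sum_Ioc_consecutive _ (Nat.zero_le u0) hu0t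
    rw [hIcc1, hIcc1]
    rw [hIcc a τ u0, hIcc srv u0 t] at hinf
    linarith
  · -- u0 < τ : use u = τ in the inf
    have hmem : τ ∈ Finset.Icc τ t := Finset.mem_Icc.mpr ⟨le_refl τ, hτt⟩
    have hinf : (Finset.Icc τ t).inf' (Finset.nonempty_Icc.mpr hτt)
          (fun u => (∑ v ∈ Finset.Icc (τ + 1) u, a v) + ∑ v ∈ Finset.Icc (u + 1) t, srv v)
        ≤ (∑ v ∈ Finset.Icc (τ + 1) τ, a v) + ∑ v ∈ Finset.Icc (τ + 1) t, srv v :=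
      Finset.inf'_le _ hmem
    have hBτ : (∑ v ∈ Finset.Ioc u0 τ, a v) - (∑ v ∈ Finset.Ioc u0 τ, srv v) ≤ B τ :=
      backlog_ge_sup a srv B hB0 hB τ u0 hcase.le
    have hA1 : (∑ v ∈ Finset.Ioc 0 u0, a v) + ∑ v ∈ Finset.Ioc u0 τ, a v
        = ∑ v ∈ Finset.Ioc 0 τ, a v :=
      Finset.sum_Ioc_consecutive _ (Nat.zero_le u0) hcase.le
    have hA2 : (∑ v ∈ Finset.Ioc 0 u0, a v) + ∑ v ∈ Finset.Ioc u0 t, a v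
        = ∑ v ∈ Finset.Ioc 0 t, a v :=
      Finset.sum_Ioc_consecutive _ (Nat.zero_le u0) hu0t
    have hS1 : (∑ v ∈ Finset.Ioc u0 τ, srv v) + ∑ v ∈ Finset.Ioc τ t, srv v
        = ∑ v ∈ Finset.Ioc u0 t, srv v :=
      Finset.sum_Ioc_consecutive _ hcase.le hτt
    rw [hIcc1, hIcc1]
    rw [hIcc a τ τ, hIcc srv τ t] at hinf
    simp only [Finset.Ioc_self, Finset.sum_empty, zero_add] at hinf
    linarith
end

section
/- Let (Ω, F, P) be a probability space, let τ ≤ t be natural numbers, and for each u with τ ≤ u ≤ t let 𝒜(τ,u) and 𝒮(u,t) be random variables taking values in (0,∞) such that 𝒜(τ,u) and 𝒮(u,t) are independent. Let D(τ,t) be a real-valued random variable satisfying almost surely e^{D(τ,t)} ≥ min_{τ≤u≤t} 𝒜(τ,u)·𝒮(u,t). Then for every real s < 1 and every real d ≥ 0, P( D(τ,t) ≤ d ) ≤ e^{(1−s)d} · Σ_{u=τ}^{t} E[𝒜(τ,u)^{s−1}] · E[𝒮(u,t)^{s−1}], where the right-hand side is allowed to be +∞. -/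
/-!
If `D ≤ d`, then some `u` has `𝒜(τ,u)·𝒮(u,t) ≤ e^d`, so a union bound reduces the claim to one
term per `u`. Since `s - 1 ≤ 0`, the map `x ↦ x^(s-1)` is antitone on `(0,∞)`, and Markov's
inequality for `(𝒜𝒮)^(s-1)` at level `e^{(s-1)d}` bounds each term; independence factors
`E[(𝒜𝒮)^(s-1)]` into the product of the two Mellin transforms.
-/

open MeasureTheory ProbabilityTheory

section

variable {Ω : Type*} [MeasurableSpace Ω] {μ : Measure Ω}

theorem measure_le_le_sum_of_ae_inf'_le {ι α : Type*} [LinearOrder α] {s : Finset ι}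
    (hs : s.Nonempty) (X : ι → Ω → α) (Y : Ω → α) (hXY : ∀ᵐ ω ∂μ, s.inf' hs (X · ω) ≤ Y ω)
    (c : α) : μ {ω | Y ω ≤ c} ≤ ∑ i ∈ s, μ {ω | X i ω ≤ c} := by
  calc μ {ω | Y ω ≤ c} ≤ μ (⋃ i ∈ s, {ω | X i ω ≤ c}) := by
        refine measure_mono_ae ?_
        filter_upwards [hXY] with ω hω hYc
        obtain ⟨i, hi, hmin⟩ := s.exists_mem_eq_inf' hs (X · ω)
        exact Set.mem_biUnion hi (show X i ω ≤ c from hmin ▸ hω.trans hYc)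
    _ ≤ ∑ i ∈ s, μ {ω | X i ω ≤ c} := measure_biUnion_finset_le _ _

theorem measure_le_le_rpow_mul_lintegral_rpow {Z : Ω → ℝ} (hZ : Measurable Z)
    (hZpos : ∀ ω, 0 < Z ω) {a p : ℝ} (ha : 0 < a) (hp : p ≤ 0) :
    μ {ω | Z ω ≤ a} ≤ ENNReal.ofReal (a ^ (-p)) * ∫⁻ ω, ENNReal.ofReal (Z ω ^ p) ∂μ := by
  have hsub : {ω | Z ω ≤ a} ⊆ {ω | ENNReal.ofReal (a ^ p) ≤ ENNReal.ofReal (Z ω ^ p)} :=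
    fun ω hω => ENNReal.ofReal_le_ofReal (Real.rpow_le_rpow_of_nonpos (hZpos ω) hω hp)
  calc μ {ω | Z ω ≤ a}
      ≤ (∫⁻ ω, ENNReal.ofReal (Z ω ^ p) ∂μ) / ENNReal.ofReal (a ^ p) :=
        (measure_mono hsub).trans <| meas_ge_le_lintegral_div
          (hZ.pow_const p).ennreal_ofReal.aemeasurable
          (by simp [Real.rpow_pos_of_pos ha]) ENNReal.ofReal_ne_top
    _ = ENNReal.ofReal (a ^ (-p)) * ∫⁻ ω, ENNReal.ofReal (Z ω ^ p) ∂μ := by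
        rw [ENNReal.div_eq_inv_mul, ← ENNReal.ofReal_inv_of_pos (Real.rpow_pos_of_pos ha p),
          Real.rpow_neg ha.le]

theorem lintegral_ofReal_mul_rpow_eq_mul_of_indepFun {X Y : Ω → ℝ} (hX : Measurable X)
    (hY : Measurable Y) (hX0 : ∀ ω, 0 ≤ X ω) (hY0 : ∀ ω, 0 ≤ Y ω) (hXY : IndepFun X Y μ)
    (p : ℝ) :
    ∫⁻ ω, ENNReal.ofReal ((X ω * Y ω) ^ p) ∂μ =
      (∫⁻ ω, ENNReal.ofReal (X ω ^ p) ∂μ) * ∫⁻ ω, ENNReal.ofReal (Y ω ^ p) ∂μ := by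
  have hφ : Measurable fun x : ℝ => ENNReal.ofReal (x ^ p) :=
    (measurable_id.pow_const p).ennreal_ofReal
  simp_rw [Real.mul_rpow (hX0 _) (hY0 _), ENNReal.ofReal_mul (Real.rpow_nonneg (hX0 _) _)]
  exact lintegral_mul_eq_lintegral_mul_lintegral_of_indepFun'' (hφ.comp hX).aemeasurable
    (hφ.comp hY).aemeasurable (hXY.comp hφ hφ)

end

theorem departures_lower_tail_mellin_bound_general
    {Ω : Type*} [MeasureSpace Ω] [IsProbabilityMeasure (ℙ : Measure Ω)]
    (A S : ℕ → ℕ → Ω → ℝ) (τ t : ℕ) (hτt : τ ≤ t)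
    (hmeasA : ∀ u, τ ≤ u → u ≤ t → Measurable (A τ u))
    (hmeasS : ∀ u, τ ≤ u → u ≤ t → Measurable (S u t))
    (hposA : ∀ u, τ ≤ u → u ≤ t → ∀ ω, 0 < A τ u ω)
    (hposS : ∀ u, τ ≤ u → u ≤ t → ∀ ω, 0 < S u t ω)
    (hindep : ∀ u, τ ≤ u → u ≤ t → IndepFun (A τ u) (S u t) ℙ)
    (D : Ω → ℝ)
    (hD : ∀ᵐ ω ∂ℙ, (Finset.Icc τ t).inf' (Finset.nonempty_Icc.mpr hτt)
        (fun u => A τ u ω * S u t ω) ≤ Real.exp (D ω))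
    (s : ℝ) (hs : s < 1) (d : ℝ) :
    ℙ {ω | D ω ≤ d} ≤
      ENNReal.ofReal (Real.exp ((1 - s) * d)) *
        ∑ u ∈ Finset.Icc τ t,
          (∫⁻ ω, ENNReal.ofReal (A τ u ω ^ (s - 1)) ∂ℙ) *
          (∫⁻ ω, ENNReal.ofReal (S u t ω ^ (s - 1)) ∂ℙ) := by
  have hterm : ∀ u ∈ Finset.Icc τ t, ℙ {ω | A τ u ω * S u t ω ≤ Real.exp d} ≤
      ENNReal.ofReal (Real.exp ((1 - s) * d)) *
        ((∫⁻ ω, ENNReal.ofReal (A τ u ω ^ (s - 1)) ∂ℙ) *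
          ∫⁻ ω, ENNReal.ofReal (S u t ω ^ (s - 1)) ∂ℙ) := by
    intro u hu
    obtain ⟨hτu, hut⟩ := Finset.mem_Icc.mp hu
    have hexp : Real.exp d ^ (-(s - 1)) = Real.exp ((1 - s) * d) := by
      rw [← Real.exp_mul]; ring_nf
    rw [← hexp, ← lintegral_ofReal_mul_rpow_eq_mul_of_indepFun (hmeasA u hτu hut)
      (hmeasS u hτu hut) (fun ω => (hposA u hτu hut ω).le) (fun ω => (hposS u hτu hut ω).le)
      (hindep u hτu hut)]
    exact measure_le_le_rpow_mul_lintegral_rpow ((hmeasA u hτu hut).mul (hmeasS u hτu hut))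
      (fun ω => mul_pos (hposA u hτu hut ω) (hposS u hτu hut ω)) (Real.exp_pos d)
      (by linarith)
  calc ℙ {ω | D ω ≤ d} = ℙ {ω | Real.exp (D ω) ≤ Real.exp d} := by simp_rw [Real.exp_le_exp]
    _ ≤ ∑ u ∈ Finset.Icc τ t, ℙ {ω | A τ u ω * S u t ω ≤ Real.exp d} :=
        measure_le_le_sum_of_ae_inf'_le _ (fun u ω => A τ u ω * S u t ω) _ hD _
    _ ≤ _ := by
        rw [Finset.mul_sum]
        exact Finset.sum_le_sum hterm

/-- Probabilistic lower bound on departures in the (min,×) network calculus: if a.s.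
`e^{D(τ,t)} ≥ min_{τ≤u≤t} 𝒜(τ,u)·𝒮(u,t)` for independent positive SNR arrival and
service processes, then for every `s < 1` and `d ≥ 0`,
`P(D(τ,t) ≤ d) ≤ e^{(1−s)d} · Σ_{u=τ}^t E[𝒜(τ,u)^{s−1}]·E[𝒮(u,t)^{s−1}]`. -/
theorem departures_lower_tail_mellin_bound
    {Ω : Type*} [MeasureSpace Ω] [IsProbabilityMeasure (ℙ : Measure Ω)]
    (A S : ℕ → ℕ → Ω → ℝ) (τ t : ℕ) (hτt : τ ≤ t)
    (hmeasA : ∀ u, τ ≤ u → u ≤ t → Measurable (A τ u))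
    (hmeasS : ∀ u, τ ≤ u → u ≤ t → Measurable (S u t))
    (hposA : ∀ u, τ ≤ u → u ≤ t → ∀ ω, 0 < A τ u ω)
    (hposS : ∀ u, τ ≤ u → u ≤ t → ∀ ω, 0 < S u t ω)
    (hindep : ∀ u, τ ≤ u → u ≤ t → IndepFun (A τ u) (S u t) ℙ)
    (D : Ω → ℝ) (hDmeas : Measurable D)
    (hD : ∀ᵐ ω ∂ℙ, (Finset.Icc τ t).inf' (Finset.nonempty_Icc.mpr hτt)
        (fun u => A τ u ω * S u t ω) ≤ Real.exp (D ω))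
    (s : ℝ) (hs : s < 1) (d : ℝ) (hd : 0 ≤ d) :
    ℙ {ω | D ω ≤ d} ≤
      ENNReal.ofReal (Real.exp ((1 - s) * d)) *
        ∑ u ∈ Finset.Icc τ t,
          (∫⁻ ω, ENNReal.ofReal (A τ u ω ^ (s - 1)) ∂ℙ) *
          (∫⁻ ω, ENNReal.ofReal (S u t ω ^ (s - 1)) ∂ℙ) :=
  departures_lower_tail_mellin_bound_general A S τ t hτt hmeasA hmeasS hposA hposS hindep D hD s hs
    d
end

section
/- Let N ≥ 1 and let (X_{k,u})_{1≤k≤N, u∈ℕ} be mutually independent, identically distributed random variables taking values in (0,∞), and set v(s) = E[X_{1,0}^{s−1}]. For each k and natural numbers τ ≤ t define 𝒮_k(τ,t) = Π_{u=τ}^{t−1} X_{k,u}, and define the network service process 𝒮_net(τ,t) = min over all chains τ = u₀ ≤ u₁ ≤ ⋯ ≤ u_{N−1} ≤ u_N = t of Π_{k=1}^{N} 𝒮_k(u_{k−1}, u_k). Then for every real s < 1 and all τ ≤ t, E[ 𝒮_net(τ,t)^{s−1} ] ≤ C(N−1+t−τ, t−τ) · v(s)^{t−τ}, where C(·,·)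 is the binomial coefficient and the expectations may be infinite. -/
open MeasureTheory ProbabilityTheory
open scoped ENNReal

/-! The minimum defining `Snet` is attained on one of finitely many chains, so
`Snet ^ (s - 1)` is at most the sum over all chains of the chain products raised to `s - 1`.
Each chain product runs over exactly `t - τ` distinct variables `X k v`, so by independence and
identical distribution its expectation is `v(s) ^ (t - τ)`. A chain is determined by its `N`
increments, which sum to `t - τ`, so there are at most `C(N - 1 + t - τ, t - τ)` chains. -/

/-- The network SNR service process of an `N`-hop path: the minimum over all monotone
chains `τ = u₀ ≤ u₁ ≤ ⋯ ≤ u_N = t` of the product `Π_{k} 𝒮_k(u_{k−1}, u_k)`, where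
`𝒮_k(τ,t) = Π_{u=τ}^{t−1} X_{k,u}` (the N-fold (min,×)-convolution). -/
noncomputable def Snet {Ω : Type*} (N : ℕ) (X : Fin N → ℕ → Ω → ℝ)
    (τ t : ℕ) (ω : Ω) : ℝ :=
  sInf { y : ℝ | ∃ u : Fin (N + 1) → ℕ, Monotone u ∧ u 0 = τ ∧ u (Fin.last N) = t ∧
    y = ∏ k : Fin N, ∏ v ∈ Finset.Ico (u k.castSucc) (u k.succ), X k v ω }

open Finset

theorem Finset.Nat.card_antidiagonalTuple (k n : ℕ) :
    #(Nat.antidiagonalTuple k n) = (k + n - 1).choose n := by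
  rw [card_eq_of_equiv_fintype
      ((Equiv.subtypeEquivRight fun _ => Nat.mem_antidiagonalTuple).trans
        (Sym.equivNatSumOfFintype (Fin k) n).symm),
    Sym.card_sym_eq_choose, Fintype.card_fin]

theorem Fin.sum_tsub_of_monotone {n : ℕ} {u : Fin (n + 1) → ℕ} (hu : Monotone u) :
    ∑ k : Fin n, (u k.succ - u k.castSucc) = u (Fin.last n) - u 0 := by
  induction n with
  | zero => simp
  | succ n ih =>
    have h := ih (u := fun i => u i.castSucc) fun a b hab =>
      hu (Fin.castSucc_le_castSucc_iff.2 hab)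
    rw [Fin.sum_univ_castSucc]
    simp only [Fin.succ_castSucc, Fin.castSucc_zero] at h ⊢
    rw [h, ← Fin.succ_last]
    have h₀ : u 0 ≤ u (Fin.last n).castSucc := hu (Fin.zero_le _)
    have h₁ : u (Fin.last n).castSucc ≤ u (Fin.last n).succ := hu (Fin.castSucc_le_succ _)
    omega

theorem Fin.eq_of_tsub_eq_of_monotone {n : ℕ} {u u' : Fin (n + 1) → ℕ} (hu : Monotone u)
    (hu' : Monotone u') (h₀ : u 0 = u' 0)
    (h : ∀ k : Fin n, u k.succ - u k.castSucc = u' k.succ - u' k.castSucc) : u = u' := by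
  funext j
  induction j using Fin.induction with
  | zero => exact h₀
  | succ k ih =>
    have := hu (Fin.castSucc_le_succ k)
    have := hu' (Fin.castSucc_le_succ k)
    have := h k
    omega

def chains (N τ t : ℕ) : Finset (Fin (N + 1) → ℕ) :=
  (Fintype.piFinset fun _ => Icc τ t).filter fun u => Monotone u ∧ u 0 = τ ∧ u (Fin.last N) = t

theorem mem_chains {N τ t : ℕ} {u : Fin (N + 1) → ℕ} :
    u ∈ chains N τ t ↔ Monotone u ∧ u 0 = τ ∧ u (Fin.last N) = t := by
  refine mem_filter.trans ⟨And.right, fun hu => ⟨Fintype.mem_piFinset.2 fun j => ?_, hu⟩⟩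
  obtain ⟨hmono, h₀, hlast⟩ := hu
  exact mem_Icc.2 ⟨h₀ ▸ hmono (Fin.zero_le j), hlast ▸ hmono (Fin.le_last j)⟩

theorem chains_nonempty {N τ t : ℕ} (hN : 0 < N) (hτt : τ ≤ t) : (chains N τ t).Nonempty := by
  refine ⟨fun k => if (k : ℕ) = 0 then τ else t, mem_chains.2 ⟨fun a b hab => ?_, by simp, ?_⟩⟩
  · have : (a : ℕ) ≤ b := hab
    dsimp only
    split_ifs <;> omega
  · simp [hN.ne']

theorem card_chains_le (N τ t : ℕ) : #(chains N τ t) ≤ (N + (t - τ) - 1).choose (t - τ) := by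
  rw [← Finset.Nat.card_antidiagonalTuple]
  refine card_le_card_of_injOn (fun u k => u k.succ - u k.castSucc) (fun u hu => ?_)
    (fun u hu u' hu' huu' => ?_)
  · obtain ⟨hmono, h₀, hlast⟩ := mem_chains.1 hu
    rw [mem_coe, Nat.mem_antidiagonalTuple, Fin.sum_tsub_of_monotone hmono, h₀, hlast]
  · obtain ⟨hmono, h₀, -⟩ := mem_chains.1 hu
    obtain ⟨hmono', h₀', -⟩ := mem_chains.1 hu'
    exact Fin.eq_of_tsub_eq_of_monotone hmono hmono' (h₀.trans h₀'.symm) (congrFun huu')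

section Chains

variable {Ω : Type*} {N : ℕ}

/-- `Π_k 𝒮_k(u_k, u_{k+1})` in the paper's notation. -/
def chainProd (X : Fin N → ℕ → Ω → ℝ) (u : Fin (N + 1) → ℕ) (ω : Ω) : ℝ :=
  ∏ k : Fin N, ∏ v ∈ Ico (u k.castSucc) (u k.succ), X k v ω

def chainSlots (u : Fin (N + 1) → ℕ) : Finset (Fin N × ℕ) :=
  (univ.sigma fun k => Ico (u k.castSucc) (u k.succ)).map (Equiv.sigmaEquivProd _ _).toEmbedding

theorem card_chainSlots {τ t : ℕ} {u : Fin (N + 1) → ℕ} (hu : u ∈ chains N τ t) :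
    #(chainSlots u) = t - τ := by
  obtain ⟨hmono, h₀, hlast⟩ := mem_chains.1 hu
  simp only [chainSlots, card_map, card_sigma, Nat.card_Ico, Fin.sum_tsub_of_monotone hmono, h₀,
    hlast]

theorem chainProd_eq_prod_chainSlots (X : Fin N → ℕ → Ω → ℝ) (u : Fin (N + 1) → ℕ) (ω : Ω) :
    chainProd X u ω = ∏ p ∈ chainSlots u, X p.1 p.2 ω := by
  rw [chainProd, chainSlots, prod_map, prod_sigma']
  rfl

theorem Snet_eq_sInf_image_chains (X : Fin N → ℕ → Ω → ℝ) (τ t : ℕ) (ω : Ω) :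
    Snet N X τ t ω = sInf ((chainProd X · ω) '' chains N τ t) := by
  rw [Snet]
  congr 1
  ext y
  simp only [Set.mem_image, mem_coe, mem_chains, chainProd]
  exact ⟨fun ⟨u, hmono, h₀, hlast, hy⟩ => ⟨u, ⟨hmono, h₀, hlast⟩, hy.symm⟩,
    fun ⟨u, ⟨hmono, h₀, hlast⟩, hy⟩ => ⟨u, hmono, h₀, hlast, hy.symm⟩⟩

theorem Snet_le_sum_chains (X : Fin N → ℕ → Ω → ℝ) {τ t : ℕ} (hN : 0 < N) (hτt : τ ≤ t)
    (g : ℝ → ℝ≥0∞) (ω : Ω) : g (Snet N X τ t ω) ≤ ∑ u ∈ chains N τ t, g (chainProd X u ω) := by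
  obtain ⟨u, hu, hmin⟩ : Snet N X τ t ω ∈ (chainProd X · ω) '' chains N τ t :=
    Snet_eq_sInf_image_chains X τ t ω ▸
      ((coe_nonempty.2 (chains_nonempty hN hτt)).image _).csInf_mem
        ((chains N τ t).finite_toSet.image _)
  exact hmin ▸ single_le_sum (f := fun u => g (chainProd X u ω)) (fun _ _ => zero_le) hu

theorem lintegral_ofReal_chainProd_rpow [MeasurableSpace Ω] {μ : Measure Ω}
    {X : Fin N → ℕ → Ω → ℝ} {Y : Ω → ℝ} (hmeas : ∀ k v, Measurable (X k v))
    (hnonneg : ∀ k v ω, 0 ≤ X k v ω) (hindep : iIndepFun (fun p : Fin N × ℕ => X p.1 p.2) μ)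
    (hident : ∀ k v, IdentDistrib (X k v) Y μ μ) (r : ℝ) {τ t : ℕ} {u : Fin (N + 1) → ℕ}
    (hu : u ∈ chains N τ t) :
    ∫⁻ ω, ENNReal.ofReal (chainProd X u ω ^ r) ∂μ =
      (∫⁻ ω, ENNReal.ofReal (Y ω ^ r) ∂μ) ^ (t - τ) := by
  let g (x : ℝ) : ℝ≥0∞ := ENNReal.ofReal (x ^ r)
  change ∫⁻ ω, g (chainProd X u ω) ∂μ = (∫⁻ ω, g (Y ω) ∂μ) ^ (t - τ)
  have hg : Measurable g := by fun_prop
  have hprod (ω : Ω) : g (chainProd X u ω) = ∏ p ∈ chainSlots u, g (X p.1 p.2 ω) := by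
    rw [chainProd_eq_prod_chainSlots,
      ← ENNReal.ofReal_prod_of_nonneg fun p _ => Real.rpow_nonneg (hnonneg p.1 p.2 ω) r,
      Real.finsetProd_rpow _ _ fun p _ => hnonneg p.1 p.2 ω]
  simp only [hprod]
  rw [lintegral_prod_eq_prod_lintegral_of_indepFun (chainSlots u) (fun p ω => g (X p.1 p.2 ω))
      (hindep.comp (fun _ => g) fun _ => hg) fun p => hg.comp (hmeas p.1 p.2),
    prod_congr rfl fun p _ => ((hident p.1 p.2).comp hg).lintegral_eq, prod_const,
    card_chainSlots hu]
  rfl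

end Chains

theorem mellin_Snet_le_binomial_bound_general
    {Ω : Type*} [MeasureSpace Ω]
    (N : ℕ) (hN : 0 < N)
    (X : Fin N → ℕ → Ω → ℝ)
    (hmeas : ∀ k u, Measurable (X k u))
    (hpos : ∀ k u ω, 0 < X k u ω)
    (hindep : iIndepFun
      (fun p : Fin N × ℕ => X p.1 p.2) ℙ)
    (hident : ∀ k u k' u', IdentDistrib (X k u) (X k' u') ℙ ℙ)
    (τ t : ℕ) (hτt : τ ≤ t) (s : ℝ) :
    ∫⁻ ω, ENNReal.ofReal (Snet N X τ t ω ^ (s - 1)) ∂ℙ ≤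
      (Nat.choose (N - 1 + (t - τ)) (t - τ) : ℝ≥0∞) *
        (∫⁻ ω, ENNReal.ofReal (X ⟨0, hN⟩ 0 ω ^ (s - 1)) ∂ℙ) ^ (t - τ) := by
  have hchain (u) (hu : u ∈ chains N τ t) := lintegral_ofReal_chainProd_rpow hmeas
    (fun k v ω => (hpos k v ω).le) hindep (fun k v => hident k v ⟨0, hN⟩ 0) (s - 1) hu
  calc ∫⁻ ω, ENNReal.ofReal (Snet N X τ t ω ^ (s - 1))
      ≤ ∫⁻ ω, ∑ u ∈ chains N τ t, ENNReal.ofReal (chainProd X u ω ^ (s - 1)) :=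
        lintegral_mono <| Snet_le_sum_chains X hN hτt fun x => ENNReal.ofReal (x ^ (s - 1))
    _ = ∑ u ∈ chains N τ t, ∫⁻ ω, ENNReal.ofReal (chainProd X u ω ^ (s - 1)) :=
        lintegral_finsetSum _ fun u _ => by unfold chainProd; fun_prop
    _ = #(chains N τ t) * (∫⁻ ω, ENNReal.ofReal (X ⟨0, hN⟩ 0 ω ^ (s - 1))) ^ (t - τ) := by
        rw [sum_congr rfl hchain, sum_const, nsmul_eq_mul]
    _ ≤ _ := by
        rw [← Nat.sub_add_comm hN]
        gcongr
        exact_mod_cast card_chains_le N τ t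

/-- Mellin-transform bound for the `N`-fold (min,×)-convolution of i.i.d. per-hop SNR
service processes: for `s < 1`,
`E[𝒮_net(τ,t)^{s−1}] ≤ C(N−1+t−τ, t−τ) · v(s)^{t−τ}` with `v(s) = E[X_{1,0}^{s−1}]`. -/
theorem mellin_Snet_le_binomial_bound
    {Ω : Type*} [MeasureSpace Ω] [IsProbabilityMeasure (ℙ : Measure Ω)]
    (N : ℕ) (hN : 0 < N)
    (X : Fin N → ℕ → Ω → ℝ)
    (hmeas : ∀ k u, Measurable (X k u))
    (hpos : ∀ k u ω, 0 < X k u ω)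
    (hindep : iIndepFun
      (fun p : Fin N × ℕ => X p.1 p.2) ℙ)
    (hident : ∀ k u k' u', IdentDistrib (X k u) (X k' u') ℙ ℙ)
    (τ t : ℕ) (hτt : τ ≤ t) (s : ℝ) (hs : s < 1) :
    ∫⁻ ω, ENNReal.ofReal (Snet N X τ t ω ^ (s - 1)) ∂ℙ ≤
      (Nat.choose (N - 1 + (t - τ)) (t - τ) : ℝ≥0∞) *
        (∫⁻ ω, ENNReal.ofReal (X ⟨0, hN⟩ 0 ω ^ (s - 1)) ∂ℙ) ^ (t - τ) :=
  mellin_Snet_le_binomial_bound_general N hN X hmeas hpos hindep hident τ t hτt s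
end
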